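/- The nullification functor P_{Xℤ} : XMod → XMod, defined on objects by (N₁, N₂, ∂) ↦ (N₁/[N₂,N₁], 1) with coaugmentation given by the canonical quotient map in level 1 and the trivial map in level 2, is admissible for the class of regular epimorphisms. -/

import Mathlib

set_option linter.unusedVariables false

/-- A crossed module of groups `(M, G, d)` with `G` acting on `M`. -/
structure XMod : Type 1 where
  M : Type
  G : Type
  [grpM : Group M]
  [grpG : Group G]
  act : G →* MulAut M
  d : M →* G
  act_d : ∀ (b : G) (t : M), d (act b t) = b * d t * b⁻¹
  peiffer : ∀ (t s : M), act (d t) s = t * s * t⁻¹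

attribute [instance] XMod.grpM XMod.grpG

/-- A morphism of crossed modules. -/
structure XModHom (N T : XMod) where
  f1 : N.M →* T.M
  f2 : N.G →* T.G
  comm_d : ∀ n, T.d (f1 n) = f2 (N.d n)
  equiv : ∀ (b : N.G) (n : N.M), f1 (N.act b n) = T.act (f2 b) (f1 n)

namespace XModHom

theorem ext {N T : XMod} {f g : XModHom N T} (h1 : f.f1 = g.f1) (h2 : f.f2 = g.f2) :
    f = g := by
  cases f; cases g; cases h1; cases h2; rfl

/-- The identity morphism. -/
def id (T : XMod) : XModHom T T :=
  ⟨MonoidHom.id _, MonoidHom.id _, fun _ => rfl, fun _ _ => rfl⟩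

/-- Composition of morphisms of crossed modules. -/
def comp {A B C : XMod} (g : XModHom B C) (f : XModHom A B) : XModHom A C where
  f1 := g.f1.comp f.f1
  f2 := g.f2.comp f.f2
  comm_d := by intro n; simp [MonoidHom.comp_apply, g.comm_d, f.comm_d]
  equiv := by intro b n; simp [MonoidHom.comp_apply, f.equiv, g.equiv]

/-- The trivial morphism of crossed modules. -/
def triv (A B : XMod) : XModHom A B where
  f1 := 1
  f2 := 1
  comm_d := by intro n; simp
  equiv := by intro b n; simp

/-- A morphism of crossed modules is an isomorphism if it has a two-sided inverse. -/
def IsIso {A B : XMod} (f : XModHom A B) : Prop :=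
  ∃ g : XModHom B A, comp g f = id A ∧ comp f g = id B

/-- Regular epimorphisms of crossed modules are exactly the componentwise
surjective morphisms. -/
def RegEpi {A B : XMod} (f : XModHom A B) : Prop :=
  Function.Surjective f.f1 ∧ Function.Surjective f.f2

/-- `κ` is a kernel of `α` (in the categorical sense). -/
def IsKernelOf {N T Q : XMod} (κ : XModHom N T) (α : XModHom T Q) : Prop :=
  comp α κ = triv N Q ∧
    ∀ (X : XMod) (u : XModHom X T), comp α u = triv X Q →
      ∃! v : XModHom X N, comp κ v = u

end XModHom

/-- `1 → N → T → Q → 1` is a short exact sequence of crossed modules. -/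
def ShortExact {N T Q : XMod} (κ : XModHom N T) (α : XModHom T Q) : Prop :=
  XModHom.IsKernelOf κ α ∧ XModHom.RegEpi α
/-- A localization functor (coaugmented idempotent functor) on `XMod`. -/
structure LocalizationFunctor where
  obj : XMod → XMod
  map : ∀ {A B : XMod}, XModHom A B → XModHom (obj A) (obj B)
  map_id : ∀ A : XMod, map (XModHom.id A) = XModHom.id (obj A)
  map_comp : ∀ {A B C : XMod} (f : XModHom A B) (g : XModHom B C),
    map (XModHom.comp g f) = XModHom.comp (map g) (map f)
  ell : ∀ A : XMod, XModHom A (obj A)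
  natural : ∀ {A B : XMod} (f : XModHom A B),
    XModHom.comp (ell B) f = XModHom.comp (map f) (ell A)
  iso_ell_obj : ∀ A : XMod, XModHom.IsIso (ell (obj A))
  iso_map_ell : ∀ A : XMod, XModHom.IsIso (map (ell A))

namespace LocalizationFunctor

/-- A crossed module is `L`-local if its coaugmentation is an isomorphism. -/
def IsLocal (L : LocalizationFunctor) (X : XMod) : Prop :=
  XModHom.IsIso (L.ell X)

/-- `L` is a regular-epi localization if every coaugmentation morphism is a
regular epimorphism. -/
def RegEpiLoc (L : LocalizationFunctor) : Prop :=
  ∀ X : XMod, XModHom.RegEpi (L.ell X)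

/-- A short exact sequence is `L`-flat if applying `L` yields a short exact sequence. -/
def LFlat (L : LocalizationFunctor) {N T Q : XMod} (κ : XModHom N T) (α : XModHom T Q) : Prop :=
  ShortExact (L.map κ) (L.map α)

end LocalizationFunctor
section Pullback

variable {T Q Q' : XMod} (α : XModHom T Q) (g : XModHom Q' Q)

/-- Level-1 part of the pullback `T ×_Q Q'`, computed componentwise. -/
def pbM : Subgroup (T.M × Q'.M) where
  carrier := {p | α.f1 p.1 = g.f1 p.2}
  one_mem' := by simp
  mul_mem' := by
    intro a b ha hb
    simp only [Set.mem_setOf_eq, Prod.fst_mul, Prod.snd_mul, map_mul] at *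
    rw [ha, hb]
  inv_mem' := by
    intro a ha
    simp only [Set.mem_setOf_eq, Prod.fst_inv, Prod.snd_inv, map_inv] at *
    rw [ha]

/-- Level-2 part of the pullback `T ×_Q Q'`, computed componentwise. -/
def pbG : Subgroup (T.G × Q'.G) where
  carrier := {p | α.f2 p.1 = g.f2 p.2}
  one_mem' := by simp
  mul_mem' := by
    intro a b ha hb
    simp only [Set.mem_setOf_eq, Prod.fst_mul, Prod.snd_mul, map_mul] at *
    rw [ha, hb]
  inv_mem' := by
    intro a ha
    simp only [Set.mem_setOf_eq, Prod.fst_inv, Prod.snd_inv, map_inv] at *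
    rw [ha]

theorem mem_pbM_iff (p : T.M × Q'.M) : p ∈ pbM α g ↔ α.f1 p.1 = g.f1 p.2 := Iff.rfl

theorem mem_pbG_iff (p : T.G × Q'.G) : p ∈ pbG α g ↔ α.f2 p.1 = g.f2 p.2 := Iff.rfl

theorem pb_act_mem {b : T.G × Q'.G} (hb : b ∈ pbG α g) {p : T.M × Q'.M}
    (hp : p ∈ pbM α g) : (T.act b.1 p.1, Q'.act b.2 p.2) ∈ pbM α g := by
  have hb' : α.f2 b.1 = g.f2 b.2 := hb
  have hp' : α.f1 p.1 = g.f1 p.2 := hp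
  show α.f1 (T.act b.1 p.1) = g.f1 (Q'.act b.2 p.2)
  rw [α.equiv, g.equiv, hb', hp']

theorem XMod.act_inv_act (X : XMod) (b : X.G) (t : X.M) :
    X.act b⁻¹ (X.act b t) = t := by
  rw [← MulAut.mul_apply, ← map_mul, inv_mul_cancel, map_one, MulAut.one_apply]

theorem XMod.act_act_inv (X : XMod) (b : X.G) (t : X.M) :
    X.act b (X.act b⁻¹ t) = t := by
  rw [← MulAut.mul_apply, ← map_mul, mul_inv_cancel, map_one, MulAut.one_apply]

/-- The action of an element of the pullback on the level-1 part, as a group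
automorphism. -/
def pbActEquiv (b : ↥(pbG α g)) : ↥(pbM α g) ≃* ↥(pbM α g) where
  toFun p := ⟨(T.act b.1.1 p.1.1, Q'.act b.1.2 p.1.2), pb_act_mem α g b.2 p.2⟩
  invFun p := ⟨(T.act b.1.1⁻¹ p.1.1, Q'.act b.1.2⁻¹ p.1.2),
    pb_act_mem α g ((pbG α g).inv_mem b.2) p.2⟩
  left_inv p := by
    apply Subtype.ext
    exact Prod.ext (T.act_inv_act _ _) (Q'.act_inv_act _ _)
  right_inv p := by
    apply Subtype.ext
    exact Prod.ext (T.act_act_inv _ _) (Q'.act_act_inv _ _)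
  map_mul' p q := by
    apply Subtype.ext
    exact Prod.ext (map_mul _ _ _) (map_mul _ _ _)

/-- The pullback `T ×_Q Q'` of `α : T → Q` along `g : Q' → Q`, computed
componentwise. -/
def pbXMod : XMod where
  M := ↥(pbM α g)
  G := ↥(pbG α g)
  act :=
    { toFun := pbActEquiv α g
      map_one' := by
        apply MulEquiv.ext
        intro p
        apply Subtype.ext
        apply Prod.ext
        · show T.act (1 : ↥(pbG α g)).1.1 p.1.1 = p.1.1
          simp
        · show Q'.act (1 : ↥(pbG α g)).1.2 p.1.2 = p.1.2
          simp
      map_mul' := by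
        intro b c
        apply MulEquiv.ext
        intro p
        apply Subtype.ext
        apply Prod.ext
        · show T.act (b * c).1.1 p.1.1 = T.act b.1.1 (T.act c.1.1 p.1.1)
          simp [map_mul]
        · show Q'.act (b * c).1.2 p.1.2 = Q'.act b.1.2 (Q'.act c.1.2 p.1.2)
          simp [map_mul] }
  d :=
    { toFun := fun p => ⟨(T.d p.1.1, Q'.d p.1.2), by
        have hp : α.f1 p.1.1 = g.f1 p.1.2 := p.2
        show α.f2 (T.d p.1.1) = g.f2 (Q'.d p.1.2)
        rw [← α.comm_d, ← g.comm_d, hp]⟩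
      map_one' := by
        apply Subtype.ext
        apply Prod.ext <;> simp
      map_mul' := by
        intro p q
        apply Subtype.ext
        apply Prod.ext <;> simp }
  act_d := by
    intro b p
    apply Subtype.ext
    apply Prod.ext
    · exact T.act_d _ _
    · exact Q'.act_d _ _
  peiffer := by
    intro p q
    apply Subtype.ext
    apply Prod.ext
    · exact T.peiffer _ _
    · exact Q'.peiffer _ _

/-- First projection of the pullback. -/
def pbFst : XModHom (pbXMod α g) T where
  f1 := (MonoidHom.fst T.M Q'.M).comp (pbM α g).subtype
  f2 := (MonoidHom.fst T.G Q'.G).comp (pbG α g).subtype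
  comm_d := fun _ => rfl
  equiv := fun _ _ => rfl

/-- Second projection of the pullback. -/
def pbSnd : XModHom (pbXMod α g) Q' where
  f1 := (MonoidHom.snd T.M Q'.M).comp (pbM α g).subtype
  f2 := (MonoidHom.snd T.G Q'.G).comp (pbG α g).subtype
  comm_d := fun _ => rfl
  equiv := fun _ _ => rfl

end Pullback
section PullbackMaps

variable {N T Q Q' : XMod}

/-- The induced morphism from the kernel `N` into the pullback `T ×_Q Q'`. -/
def pbIn (κ : XModHom N T) (α : XModHom T Q) (g : XModHom Q' Q)
    (h : XModHom.comp α κ = XModHom.triv N Q) : XModHom N (pbXMod α g) where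
  f1 :=
    { toFun := fun n => ⟨(κ.f1 n, 1), by
        show α.f1 (κ.f1 n) = g.f1 1
        have := congrArg XModHom.f1 h
        have h' : α.f1 (κ.f1 n) = 1 := DFunLike.congr_fun this n
        rw [h', map_one]⟩
      map_one' := by
        apply Subtype.ext
        apply Prod.ext <;> (try simp) <;> first | rfl | exact map_one _
      map_mul' := by
        intro a b
        apply Subtype.ext
        show (κ.f1 (a * b), (1 : Q'.M)) = (κ.f1 a, (1 : Q'.M)) * (κ.f1 b, (1 : Q'.M))
        simp [Prod.ext_iff, map_mul] }
  f2 :=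
    { toFun := fun n => ⟨(κ.f2 n, 1), by
        show α.f2 (κ.f2 n) = g.f2 1
        have := congrArg XModHom.f2 h
        have h' : α.f2 (κ.f2 n) = 1 := DFunLike.congr_fun this n
        rw [h', map_one]⟩
      map_one' := by
        apply Subtype.ext
        apply Prod.ext <;> (try simp) <;> first | rfl | exact map_one _
      map_mul' := by
        intro a b
        apply Subtype.ext
        show (κ.f2 (a * b), (1 : Q'.G)) = (κ.f2 a, (1 : Q'.G)) * (κ.f2 b, (1 : Q'.G))
        simp [Prod.ext_iff, map_mul] }
  comm_d := by
    intro n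
    apply Subtype.ext
    apply Prod.ext
    · exact κ.comm_d n
    · show Q'.d (1 : Q'.M) = 1
      simp
  equiv := by
    intro b n
    apply Subtype.ext
    apply Prod.ext
    · exact κ.equiv b n
    · show (1 : Q'.M) = Q'.act 1 1
      simp

/-- The induced morphism into the pullback `T ×_Q Q'` from an object mapping
trivially to `Q` through the second leg. -/
def pbInR (α : XModHom T Q) (g : XModHom Q' Q) {X : XMod} (u : XModHom X Q')
    (h : XModHom.comp g u = XModHom.triv X Q) : XModHom X (pbXMod α g) where
  f1 :=
    { toFun := fun n => ⟨(1, u.f1 n), by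
        show α.f1 1 = g.f1 (u.f1 n)
        have := congrArg XModHom.f1 h
        have h' : g.f1 (u.f1 n) = 1 := DFunLike.congr_fun this n
        rw [h', map_one]⟩
      map_one' := by
        apply Subtype.ext
        apply Prod.ext <;> (try simp) <;> first | rfl | exact map_one _
      map_mul' := by
        intro a b
        apply Subtype.ext
        show ((1 : T.M), u.f1 (a * b)) = ((1 : T.M), u.f1 a) * ((1 : T.M), u.f1 b)
        simp [Prod.ext_iff, map_mul] }
  f2 :=
    { toFun := fun n => ⟨(1, u.f2 n), by
        show α.f2 1 = g.f2 (u.f2 n)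
        have := congrArg XModHom.f2 h
        have h' : g.f2 (u.f2 n) = 1 := DFunLike.congr_fun this n
        rw [h', map_one]⟩
      map_one' := by
        apply Subtype.ext
        apply Prod.ext <;> (try simp) <;> first | rfl | exact map_one _
      map_mul' := by
        intro a b
        apply Subtype.ext
        show ((1 : T.G), u.f2 (a * b)) = ((1 : T.G), u.f2 a) * ((1 : T.G), u.f2 b)
        simp [Prod.ext_iff, map_mul] }
  comm_d := by
    intro n
    apply Subtype.ext
    apply Prod.ext
    · show T.d (1 : T.M) = 1
      simp
    · exact u.comm_d n
  equiv := by
    intro b n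
    apply Subtype.ext
    apply Prod.ext
    · show (1 : T.M) = T.act 1 1
      simp
    · exact u.equiv b n

/-- The morphism of pullbacks `T ×_Q Q' → E ×_Q Q'` induced by `f : T → E`
with `p ∘ f = α`. -/
def pbMapL {E : XMod} (α : XModHom T Q) (p : XModHom E Q) (g : XModHom Q' Q)
    (f : XModHom T E) (hpf : XModHom.comp p f = α) :
    XModHom (pbXMod α g) (pbXMod p g) where
  f1 :=
    { toFun := fun w => ⟨(f.f1 w.1.1, w.1.2), by
        show p.f1 (f.f1 w.1.1) = g.f1 w.1.2
        have h' : p.f1 (f.f1 w.1.1) = α.f1 w.1.1 :=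
          DFunLike.congr_fun (congrArg XModHom.f1 hpf) w.1.1
        rw [h']
        exact w.2⟩
      map_one' := by
        apply Subtype.ext
        apply Prod.ext <;> (try simp) <;> first | rfl | exact map_one _
      map_mul' := by
        intro a b
        apply Subtype.ext
        apply Prod.ext
        · exact map_mul f.f1 a.1.1 b.1.1
        · rfl }
  f2 :=
    { toFun := fun w => ⟨(f.f2 w.1.1, w.1.2), by
        show p.f2 (f.f2 w.1.1) = g.f2 w.1.2
        have h' : p.f2 (f.f2 w.1.1) = α.f2 w.1.1 :=
          DFunLike.congr_fun (congrArg XModHom.f2 hpf) w.1.1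
        rw [h']
        exact w.2⟩
      map_one' := by
        apply Subtype.ext
        apply Prod.ext <;> (try simp) <;> first | rfl | exact map_one _
      map_mul' := by
        intro a b
        apply Subtype.ext
        apply Prod.ext
        · exact map_mul f.f2 a.1.1 b.1.1
        · rfl }
  comm_d := by
    intro w
    apply Subtype.ext
    apply Prod.ext
    · exact f.comm_d _
    · rfl
  equiv := by
    intro b w
    apply Subtype.ext
    apply Prod.ext
    · exact f.equiv _ _
    · rfl

end PullbackMaps

/-- A commuting square is a pullback square (categorical definition). -/
def IsPullbackSquare {P X Y Z : XMod} (p1 : XModHom P X) (p2 : XModHom P Y)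
    (f : XModHom X Z) (h : XModHom Y Z) : Prop :=
  XModHom.comp f p1 = XModHom.comp h p2 ∧
    ∀ (W : XMod) (u : XModHom W X) (v : XModHom W Y),
      XModHom.comp f u = XModHom.comp h v →
        ∃! w : XModHom W P, XModHom.comp p1 w = u ∧ XModHom.comp p2 w = v

namespace LocalizationFunctor

/-- `L` is admissible for the class of regular epimorphisms: applying `L` to the
pullback of a regular epimorphism `α : LT → LQ` along the coaugmentation
`ℓ^Q : Q → LQ` yields again a pullback square. -/
def Admissible (L : LocalizationFunctor) : Prop :=
  ∀ (T Q : XMod) (α : XModHom (L.obj T) (L.obj Q)), XModHom.RegEpi α →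
    IsPullbackSquare (L.map (pbFst α (L.ell Q))) (L.map (pbSnd α (L.ell Q)))
      (L.map α) (L.map (L.ell Q))

/-- `L` is conditionally flat: the pullback of any `L`-flat short exact sequence
along any morphism is again `L`-flat. -/
def ConditionallyFlat (L : LocalizationFunctor) : Prop :=
  ∀ (N T Q : XMod) (κ : XModHom N T) (α : XModHom T Q) (hse : ShortExact κ α),
    L.LFlat κ α →
      ∀ (Q' : XMod) (g : XModHom Q' Q),
        L.LFlat (pbIn κ α g hse.1.1) (pbSnd α g)

/-- A short exact sequence `1 → N → T → Q → 1` admits a fiberwise localization: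
there is a short exact sequence `1 → LN → E → Q → 1` together with an
`L`-equivalence `T → E` compatible with the coaugmentation of `N`. -/
def AdmitsFiberwise (L : LocalizationFunctor) {N T Q : XMod} (κ : XModHom N T)
    (α : XModHom T Q) : Prop :=
  ∃ (E : XMod) (j : XModHom (L.obj N) E) (p : XModHom E Q) (e : XModHom T E),
    ShortExact j p ∧ XModHom.IsIso (L.map e) ∧
      XModHom.comp e κ = XModHom.comp j (L.ell N) ∧ XModHom.comp p e = α

end LocalizationFunctor
section Kernel

variable {N T : XMod} (f : XModHom N T)

theorem ker_act_mem {b : N.G} (hb : b ∈ f.f2.ker) {n : N.M} (hn : n ∈ f.f1.ker) :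
    N.act b n ∈ f.f1.ker := by
  have hb' : f.f2 b = 1 := hb
  have hn' : f.f1 n = 1 := hn
  show f.f1 (N.act b n) = 1
  rw [f.equiv, hb', hn', map_one]

/-- The automorphism of `ker f.f1` induced by an element of `ker f.f2`. -/
def kerActEquiv (b : ↥f.f2.ker) : ↥f.f1.ker ≃* ↥f.f1.ker where
  toFun n := ⟨N.act b.1 n.1, ker_act_mem f b.2 n.2⟩
  invFun n := ⟨N.act b.1⁻¹ n.1, ker_act_mem f (f.f2.ker.inv_mem b.2) n.2⟩
  left_inv n := Subtype.ext (N.act_inv_act _ _)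
  right_inv n := Subtype.ext (N.act_act_inv _ _)
  map_mul' n m := Subtype.ext (map_mul _ _ _)

/-- The kernel of a morphism of crossed modules, computed componentwise. -/
def kerXMod : XMod where
  M := ↥f.f1.ker
  G := ↥f.f2.ker
  act :=
    { toFun := kerActEquiv f
      map_one' := by
        apply MulEquiv.ext
        intro n
        apply Subtype.ext
        show N.act (1 : ↥f.f2.ker).1 n.1 = n.1
        simp
      map_mul' := by
        intro b c
        apply MulEquiv.ext
        intro n
        apply Subtype.ext
        show N.act (b * c).1 n.1 = N.act b.1 (N.act c.1 n.1)
        simp [map_mul] }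
  d :=
    { toFun := fun n => ⟨N.d n.1, by
        have hn : f.f1 n.1 = 1 := n.2
        show f.f2 (N.d n.1) = 1
        rw [← f.comm_d, hn, map_one]⟩
      map_one' := by
        apply Subtype.ext
        simp
      map_mul' := by
        intro a b
        apply Subtype.ext
        show N.d (a * b).1 = N.d a.1 * N.d b.1
        simp }
  act_d := by
    intro b n
    apply Subtype.ext
    exact N.act_d _ _
  peiffer := by
    intro n m
    apply Subtype.ext
    exact N.peiffer _ _

/-- The inclusion of the kernel. -/
def kerIncl : XModHom (kerXMod f) N where
  f1 := f.f1.ker.subtype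
  f2 := f.f2.ker.subtype
  comm_d := fun _ => rfl
  equiv := fun _ _ => rfl

end Kernel

/-- A crossed module is trivial if both underlying groups are trivial. -/
def XMod.IsTrivial (X : XMod) : Prop :=
  (∀ m : X.M, m = 1) ∧ ∀ b : X.G, b = 1

/-- `X` is `A`-null if the only morphism of crossed modules `A → X` is the
trivial one. -/
def ANull (A X : XMod) : Prop :=
  ∀ φ : XModHom A X, φ = XModHom.triv A X

/-- `X` is `f`-local if precomposition with `f` is a bijection on morphisms
into `X`. -/
def FLocal {B C : XMod} (f : XModHom B C) (X : XMod) : Prop :=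
  Function.Bijective fun φ : XModHom C X => XModHom.comp φ f

/-- The subgroup `[N₂, N₁]` of `N₁` generated by the elements `ᵇt·t⁻¹`. -/
def actCommutator (N : XMod) : Subgroup N.M :=
  Subgroup.closure {x | ∃ (b : N.G) (t : N.M), x = N.act b t * t⁻¹}

section NormalClosure

variable {A W : XMod} (φ : XModHom A W)

/-- The level-2 part of the normal closure of the image of `φ`:
the normal closure of `φ₂(A₂)` in `W₂`. -/
def ncl2 : Subgroup W.G :=
  Subgroup.normalClosure (Set.range φ.f2)

/-- The level-1 part of the normal closure of the image of `φ`: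
the subgroup `φ₁(A₁)^{W₂}·[φ₂(A₂)^{W₂}, W₁]` of `W₁`. -/
def ncl1 : Subgroup W.M :=
  Subgroup.closure
    ({x | ∃ (b : W.G) (m : A.M), x = W.act b (φ.f1 m)} ∪
      {x | ∃ s ∈ ncl2 φ, ∃ w : W.M, x = W.act s w * w⁻¹})

end NormalClosure

/-!
Since `P ℓ^Q` is an isomorphism, the square is a pullback as soon as `P π` is one, where
`π : W = PT ×_{PQ} Q → PT` is the first projection. Both second levels are trivial, and in level 1
`P π` is the map `W₁/[W₂,W₁] → PT₁` induced by `π₁`. It is onto because `π₁` is (pullback of the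
surjection `ℓ^Q₁`). It is injective because `ker π₁` consists of the pairs `(1, q)` with
`q ∈ ker ℓ^Q₁ = [Q₂,Q₁]`, and a generator `ᶜt·t⁻¹` of `[Q₂,Q₁]` is the second coordinate of
the generator `^(1,c)(t',t)·(t',t)⁻¹` of `[W₂,W₁]`, where `t'` exists since `α₁` is onto and `(1, c) ∈ W₂`
since `(PQ)₂ = 1`; the first coordinate of any element of `[W₂,W₁]` lies in `[(PT)₂,PT₁] = 1`.
-/

namespace XModHom

theorem comp_assoc {A B C D : XMod} (h : XModHom C D) (g : XModHom B C) (f : XModHom A B) :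
    comp (comp h g) f = comp h (comp g f) := rfl

theorem id_comp {A B : XMod} (f : XModHom A B) : comp (id B) f = f := rfl

theorem isIso_of_bijective {A B : XMod} (f : XModHom A B)
    (h1 : Function.Bijective f.f1) (h2 : Function.Bijective f.f2) : IsIso f := by
  let e1 : A.M ≃* B.M := MulEquiv.ofBijective f.f1 h1
  let e2 : A.G ≃* B.G := MulEquiv.ofBijective f.f2 h2
  have he1 : ∀ b, f.f1 (e1.symm b) = b := e1.apply_symm_apply
  have he2 : ∀ b, f.f2 (e2.symm b) = b := e2.apply_symm_apply
  refine ⟨⟨e1.symm.toMonoidHom, e2.symm.toMonoidHom, fun b => ?_, fun b n => ?_⟩, ?_, ?_⟩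
  · apply h2.1
    change f.f2 (A.d (e1.symm b)) = f.f2 (e2.symm (B.d b))
    rw [he2, ← f.comm_d, he1]
  · apply h1.1
    change f.f1 (e1.symm (B.act b n)) = f.f1 (A.act (e2.symm b) (e1.symm n))
    rw [he1, f.equiv, he2, he1]
  · exact ext (MonoidHom.ext e1.symm_apply_apply) (MonoidHom.ext e2.symm_apply_apply)
  · exact ext (MonoidHom.ext he1) (MonoidHom.ext he2)

end XModHom

theorem isPullbackSquare_of_isIso {P X Y Z : XMod} (p1 : XModHom P X) (p2 : XModHom P Y)
    (f : XModHom X Z) (h : XModHom Y Z)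
    (hcomm : XModHom.comp f p1 = XModHom.comp h p2)
    (hp1 : XModHom.IsIso p1) (hh : XModHom.IsIso h) :
    IsPullbackSquare p1 p2 f h := by
  obtain ⟨q, hqp, hpq⟩ := hp1
  obtain ⟨k, hkh, -⟩ := hh
  refine ⟨hcomm, fun W u v huv => ⟨XModHom.comp q u, ⟨?_, ?_⟩, ?_⟩⟩
  · rw [← XModHom.comp_assoc, hpq, XModHom.id_comp]
  · calc XModHom.comp p2 (XModHom.comp q u)
        = XModHom.comp (XModHom.comp k h) (XModHom.comp p2 (XModHom.comp q u)) := by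
          rw [hkh, XModHom.id_comp]
      _ = XModHom.comp k (XModHom.comp (XModHom.comp f p1) (XModHom.comp q u)) := by
          rw [hcomm]; rfl
      _ = XModHom.comp k (XModHom.comp f (XModHom.comp (XModHom.comp p1 q) u)) := rfl
      _ = v := by rw [hpq, XModHom.id_comp, huv, ← XModHom.comp_assoc, hkh, XModHom.id_comp]
  · rintro w ⟨rfl, -⟩
    rw [← XModHom.comp_assoc, hqp, XModHom.id_comp]

theorem pbFst_comm {T Q Q' : XMod} (α : XModHom T Q) (g : XModHom Q' Q) :
    XModHom.comp α (pbFst α g) = XModHom.comp g (pbSnd α g) :=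
  XModHom.ext (MonoidHom.ext fun w => w.2) (MonoidHom.ext fun w => w.2)

theorem pbFst_f1_surjective {T Q Q' : XMod} (α : XModHom T Q) (g : XModHom Q' Q)
    (hg : Function.Surjective g.f1) : Function.Surjective (pbFst α g).f1 := by
  intro t
  obtain ⟨q, hq⟩ := hg (α.f1 t)
  exact ⟨⟨(t, q), hq.symm⟩, rfl⟩

theorem actCommutator_eq_bot {X : XMod} (hX : ∀ b : X.G, b = 1) : actCommutator X = ⊥ := by
  refine eq_bot_iff.mpr ((Subgroup.closure_le _).mpr ?_)
  rintro _ ⟨b, t, rfl⟩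
  simp [hX b]

theorem actCommutator_map_le {N T : XMod} (f : XModHom N T) :
    (actCommutator N).map f.f1 ≤ actCommutator T := by
  rw [actCommutator, MonoidHom.map_closure]
  refine Subgroup.closure_mono ?_
  rintro _ ⟨_, ⟨b, t, rfl⟩, rfl⟩
  exact ⟨f.f2 b, f.f1 t, by rw [map_mul, map_inv, f.equiv]⟩

section PullbackOfTruncated

variable {T Q Q' : XMod} (α : XModHom T Q) (g : XModHom Q' Q)

theorem actCommutator_le_map_pbSnd (hα : Function.Surjective α.f1) (hQ : ∀ b : Q.G, b = 1) :
    actCommutator Q' ≤ (actCommutator (pbXMod α g)).map (pbSnd α g).f1 := by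
  refine (Subgroup.closure_le _).mpr ?_
  rintro _ ⟨c, t, rfl⟩
  obtain ⟨t', ht'⟩ := hα (g.f1 t)
  have hc : ((1 : T.G), c) ∈ pbG α g := (hQ _).trans (hQ _).symm
  exact ⟨_, Subgroup.subset_closure ⟨⟨_, hc⟩, ⟨(t', t), ht'⟩, rfl⟩, rfl⟩

theorem comap_pbFst_actCommutator_le (hα : Function.Surjective α.f1) (hT : ∀ b : T.G, b = 1)
    (hQ : ∀ b : Q.G, b = 1) (hg : g.f1.ker ≤ actCommutator Q') :
    (actCommutator T).comap (pbFst α g).f1 ≤ actCommutator (pbXMod α g) := by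
  rw [actCommutator_eq_bot hT, MonoidHom.comap_bot]
  intro w (hw : w.1.1 = 1)
  have hq : w.1.2 ∈ actCommutator Q' := hg (by
    change g.f1 w.1.2 = 1
    rw [← w.2, hw, map_one])
  obtain ⟨w₀, hw₀, hw₀q⟩ := actCommutator_le_map_pbSnd α g hα hQ hq
  have hw₀t : (pbFst α g).f1 w₀ = 1 := by
    have := actCommutator_map_le (pbFst α g) ⟨w₀, hw₀, rfl⟩
    rwa [actCommutator_eq_bot hT, Subgroup.mem_bot] at this
  have : w₀ = w := Subtype.ext (Prod.ext (hw₀t.trans hw.symm) hw₀q)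
  exact this ▸ hw₀

end PullbackOfTruncated

namespace LocalizationFunctor

/-- `P` is (a model of) `P_{Xℤ}`: its values have trivial second level and its coaugmentation is,
in level 1, the quotient map `N₁ → N₁/[N₂,N₁]`. -/
def IsNullificationXZ (P : LocalizationFunctor) : Prop :=
  ∀ N : XMod, (∀ b : (P.obj N).G, b = 1) ∧
    Function.Surjective (P.ell N).f1 ∧ (P.ell N).f1.ker = actCommutator N

theorem isIso_map_of_comap_actCommutator_le {P : LocalizationFunctor} (hP : P.IsNullificationXZ)
    {W X : XMod} (f : XModHom W X) (hf : Function.Surjective f.f1)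
    (hker : (actCommutator X).comap f.f1 ≤ actCommutator W) : XModHom.IsIso (P.map f) := by
  have hnat : (P.map f).f1.comp (P.ell W).f1 = (P.ell X).f1.comp f.f1 :=
    (congrArg XModHom.f1 (P.natural f)).symm
  refine XModHom.isIso_of_bijective _ ⟨?_, ?_⟩ ⟨fun a b _ => ?_, fun b => ⟨1, ?_⟩⟩
  · rw [injective_iff_map_eq_one]
    intro x hx
    obtain ⟨w, rfl⟩ := (hP W).2.1 x
    have hfw : f.f1 w ∈ actCommutator X := by
      rw [← (hP X).2.2]
      exact (DFunLike.congr_fun hnat w).symm.trans hx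
    exact ((hP W).2.2 ▸ hker hfw : w ∈ (P.ell W).f1.ker)
  · refine Function.Surjective.of_comp (g := (P.ell W).f1) ?_
    rw [← MonoidHom.coe_comp, hnat, MonoidHom.coe_comp]
    exact (hP X).2.1.comp hf
  · rw [(hP W).1 a, (hP W).1 b]
  · rw [map_one, (hP X).1 b]

end LocalizationFunctor

/-- The nullification functor `P_{Xℤ}` on `XMod`, sending
`(N₁, N₂, ∂)` to `(N₁/[N₂,N₁], 1)` (characterized here by its coaugmentation:
the level-2 group of `P N` is trivial and the level-1 component of the
coaugmentation is the canonical quotient map, i.e. surjective with kernel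
`[N₂,N₁]`), is admissible for the class of regular epimorphisms. -/
theorem PXZ_admissible (P : LocalizationFunctor)
    (hP : ∀ N : XMod,
      (∀ b : (P.obj N).G, b = 1) ∧
      Function.Surjective (P.ell N).f1 ∧
      (P.ell N).f1.ker = actCommutator N) :
    P.Admissible := by
  intro T Q α hα
  refine isPullbackSquare_of_isIso _ _ _ _ ?_ ?_ (P.iso_map_ell Q)
  · rw [← P.map_comp, pbFst_comm, P.map_comp]
  · refine LocalizationFunctor.isIso_map_of_comap_actCommutator_le hP _
      (pbFst_f1_surjective α _ (hP Q).2.1) ?_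
    exact comap_pbFst_actCommutator_le α _ hα.1 (hP T).1 (hP Q).1 (hP Q).2.2.le
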